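/- Let N, k, d be integers with 2 ≤ N ≤ k and d ≥ 1. Then (1/k) · d^{1+(k−N)d} · w(O_{h^{N−2}} O_{h^{−1−(k−N)d}})_{0,2} = (kd)! / (d!)^N, where w(O_{h^{N−2}} O_{h^{−1−(k−N)d}})_{0,2} := (2πi)^{−(d+1)} ∮_{C_0} dz_0/z_0^N ⋯ ∮_{C_d} dz_d/z_d^N · z_0^{N−2} (∏_{l=1}^{d} e^k(z_{l−1},z_l)) · (∏_{l=1}^{d−1} 1/(k z_l (2z_l − z_{l−1} − z_{l+1}))) · (1/z_d^{1+(k−N)d}). -/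

import Mathlib

open Complex Finset

/-- `e^k(z,w) := ∏_{j=0}^{k} ((k-j)z + jw)`. -/
noncomputable def ek (k : ℕ) (z w : ℂ) : ℂ :=
  ∏ j ∈ Finset.range (k + 1), (((k : ℂ) - (j : ℂ)) * z + (j : ℂ) * w)

/-- Iterated residue integration: the variables `z_0, z_1, …, z_{n-1}` are integrated
in ascending order of the index (variable `0` innermost, i.e. first), the variable `z_i`
over the circle of radius `r i` centered at the origin, each integration carrying the
normalizing factor `(2πi)⁻¹`; thus each integration computes the sum of the residues
at the poles enclosed by the corresponding circle. -/
noncomputable def iterOp (r : ℕ → ℝ) : ℕ → ((ℕ → ℂ) → ℂ) → ((ℕ → ℂ) → ℂ)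
  | 0, F => F
  | n + 1, F => fun z =>
      (2 * (Real.pi : ℂ) * Complex.I)⁻¹ *
        ∮ w in C((0 : ℂ), r n), iterOp r n F (Function.update z n w)

/-- The integrand of the residue integral defining
`w(O_{h^{N-2}} O_{h^{-1-(k-N)d}})_{0,2}`, i.e.
`(∏_{i=0}^{d} z_i^{-N}) · z_0^{N-2} (∏_{l=1}^{d} e^k(z_{l-1},z_l)) ·
(∏_{l=1}^{d-1} 1/(k z_l(2z_l - z_{l-1} - z_{l+1}))) · z_d^{-1-(k-N)d}`. -/
noncomputable def integrandCY (N k d : ℕ) (z : ℕ → ℂ) : ℂ :=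
  (∏ i ∈ Finset.range (d + 1), z i ^ (-(N : ℤ))) *
    z 0 ^ ((N : ℤ) - 2) *
    (∏ l ∈ Finset.Icc 1 d, ek k (z (l - 1)) (z l)) *
    (∏ l ∈ Finset.Icc 1 (d - 1),
      ((k : ℂ) * z l * (2 * z l - z (l - 1) - z (l + 1)))⁻¹) *
    z d ^ (-(1 + ((k : ℤ) - (N : ℤ)) * (d : ℤ)))

/-- `w(O_{h^{N-2}} O_{h^{-1-(k-N)d}})_{0,2}` as an iterated residue integral. -/
noncomputable def wCY (N k d : ℕ) (r : ℕ → ℝ) : ℂ :=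
  iterOp r (d + 1) (integrandCY N k d) fun _ => 0

/-- head split for Icc products -/
lemma prodIcc_head {a b : ℕ} (h : a ≤ b) (f : ℕ → ℂ) :
    ∏ l ∈ Icc a b, f l = f a * ∏ l ∈ Icc (a+1) b, f l := by
  rw [Finset.Icc_add_one_left_eq_Ioc, Finset.mul_prod_Ioc_eq_prod_Icc h]

lemma ek_factor (k : ℕ) (z w : ℂ) :
    ek k z w = (∏ j ∈ range k, (((k : ℂ) - ((j:ℂ)+1)) * z + ((j:ℂ)+1) * w)) * ((k:ℂ) * z) := by
  rw [ek, Finset.prod_range_succ']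
  congr 1
  · exact Finset.prod_congr rfl (by intro j _; push_cast; ring)
  · push_cast; ring

lemma factorial_add_prod (n m : ℕ) :
    Nat.factorial (n + m) = Nat.factorial n * ∏ j ∈ range m, (n + j + 1) := by
  induction m with
  | zero => simp
  | succ m ih =>
    rw [Finset.prod_range_succ, ← mul_assoc, ← ih, ← Nat.add_assoc, Nat.factorial_succ, mul_comm]

/-- the constant after integrating `z_0,…,z_{i-1}` -/
noncomputable def CF (N k i : ℕ) : ℂ :=
  (k : ℂ) * (Nat.factorial (k * i) : ℂ) /
    ((Nat.factorial i : ℂ) ^ N * (i : ℂ) ^ (i * (k - N) + 1))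

lemma CF_rec (N k i : ℕ) (hNk : N ≤ k) (hk : 1 ≤ k) (hi : 1 ≤ i) :
    CF N k (i+1) = CF N k i * ((i:ℂ)/((i:ℂ)+1)) * ((i:ℂ)/((i:ℂ)+1))^(i*(k-N)) *
      (((i:ℂ)+1)⁻¹)^k * ∏ j ∈ range k, (((k*i+j+1 : ℕ) : ℂ)) := by
  obtain ⟨m, rfl⟩ : ∃ m, k = N + m := ⟨k - N, (Nat.add_sub_cancel' hNk).symm⟩
  have hsub : N + m - N = m := by omega
  have h2 : Nat.factorial ((N+m)*(i+1)) =
      Nat.factorial ((N+m)*i) * ∏ j ∈ range (N+m), ((N+m)*i + j + 1) := by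
    rw [show (N+m)*(i+1) = (N+m)*i + (N+m) by ring]; exact factorial_add_prod _ _
  have hfi : ((Nat.factorial i : ℂ)) ≠ 0 := Nat.cast_ne_zero.2 (Nat.factorial_ne_zero i)
  have hi0 : (i:ℂ) ≠ 0 := Nat.cast_ne_zero.2 (by omega)
  have hi1 : ((i:ℂ)+1) ≠ 0 := by
    have : ((i+1 : ℕ) : ℂ) ≠ 0 := Nat.cast_ne_zero.2 (by omega)
    push_cast at this; exact this
  rw [CF, CF, hsub, h2, ← Nat.cast_prod]
  set P := (∏ j ∈ range (N+m), ((N+m)*i+j+1) : ℕ) with hP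
  have hfs : (((i+1).factorial : ℕ) : ℂ) = ((i:ℂ)+1) * ((i.factorial : ℕ):ℂ) := by
    rw [Nat.factorial_succ]; push_cast; ring
  have hcs : ((i+1:ℕ):ℂ) = (i:ℂ)+1 := by push_cast; ring
  rw [hfs, hcs, Nat.cast_mul]
  generalize hb : ((i:ℂ)+1) = b at hi1 ⊢
  rw [div_pow, inv_pow, inv_eq_one_div, div_mul_div_comm, div_mul_div_comm, div_mul_div_comm,
    div_mul_eq_mul_div,
    div_eq_div_iff (mul_ne_zero (pow_ne_zero _ (mul_ne_zero hi1 hfi))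
        (pow_ne_zero _ hi1))
      (mul_ne_zero (mul_ne_zero (mul_ne_zero (mul_ne_zero (pow_ne_zero _ hfi)
        (pow_ne_zero _ hi0)) hi1) (pow_ne_zero _ hi1)) (pow_ne_zero _ hi1))]
  push_cast
  ring

lemma cauchy_step {R : ℝ} (hR : 0 < R) {p : ℂ} (hp : ‖p‖ < R) {g f : ℂ → ℂ}
    (hg : DifferentiableOn ℂ g (Metric.closedBall 0 R))
    (hf : ∀ w ∈ Metric.sphere (0:ℂ) R, f w = (w - p)⁻¹ * g w) :
    (2 * (Real.pi:ℂ) * Complex.I)⁻¹ * (∮ w in C((0:ℂ), R), f w) = g p := by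
  have hp' : p ∈ Metric.ball (0:ℂ) R := by
    simpa [Metric.mem_ball, Complex.dist_eq] using hp
  have hcl : DiffContOnCl ℂ g (Metric.ball 0 R) :=
    DifferentiableOn.diffContOnCl (by rwa [closure_ball (0:ℂ) hR.ne'])
  have h2 : (∮ z in C((0:ℂ), R), f z) = (2 * (Real.pi:ℂ) * Complex.I) • g p := by
    rw [circleIntegral.integral_congr hR.le (g := fun z => (z - p)⁻¹ • g z)
      (fun w hw => by rw [hf w hw]; simp [smul_eq_mul])]
    exact hcl.circleIntegral_sub_inv_smul hp'
  rw [h2, smul_eq_mul, inv_mul_cancel_left₀ Complex.two_pi_I_ne_zero]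

lemma radius_aux {d : ℕ} {r : ℕ → ℝ} (hrpos : ∀ i, i ≤ d → 0 < r i)
    (hrconc : ∀ i, 1 ≤ i → i + 1 ≤ d → r (i - 1) + r (i + 1) < 2 * r i) :
    ∀ i, 1 ≤ i → i + 1 ≤ d → (i:ℝ) * r (i+1) + r 0 < ((i:ℝ)+1) * r i := by
  intro i
  induction i with
  | zero => intro h; omega
  | succ n ih =>
    intro _ hn1
    rcases Nat.eq_zero_or_pos n with hn | hn
    · subst hn
      have := hrconc 1 le_rfl (by omega)
      push_cast
      norm_num at this ⊢
      linarith
    · have h1 := ih (by omega) (by omega)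
      have h2 := hrconc (n+1) (by omega) (by omega)
      simp only [Nat.add_sub_cancel] at h2
      push_cast
      push_cast at h1
      nlinarith [hrpos 0 (by omega)]

lemma radius_lt {d : ℕ} {r : ℕ → ℝ} (hrpos : ∀ i, i ≤ d → 0 < r i)
    (hrconc : ∀ i, 1 ≤ i → i + 1 ≤ d → r (i - 1) + r (i + 1) < 2 * r i) :
    ∀ i, 1 ≤ i → i + 1 ≤ d → (i:ℝ) * r (i+1) < ((i:ℝ)+1) * r i := by
  intro i h1 h2
  have := radius_aux hrpos hrconc i h1 h2
  have := hrpos 0 (by omega)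
  linarith

noncomputable def Qk (k : ℕ) (a w : ℂ) : ℂ :=
  ∏ j ∈ range k, (((k:ℂ) - ((j:ℂ)+1)) * w + ((j:ℂ)+1) * a)

lemma ek_eq_Qk (k : ℕ) (z w : ℂ) : ek k z w = Qk k w z * ((k:ℂ) * z) := ek_factor k z w

noncomputable def midA (N k d i : ℕ) (z : ℕ → ℂ) : ℂ :=
  CF N k i * (z i) ^ (i*(k-N)) * ((k:ℂ) * z i)⁻¹ *
    ((((i:ℂ)+1)/(i:ℂ)) * z i - z (i+1))⁻¹ *
    (∏ l ∈ Icc (i+1) d, ek k (z (l-1)) (z l)) *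
    (∏ l ∈ Icc (i+1) d, (z l) ^ (-(N:ℤ))) *
    (∏ l ∈ Icc (i+1) (d-1), ((k:ℂ) * z l * (2*z l - z (l-1) - z (l+1)))⁻¹) *
    (z d) ^ (-(1 + ((k:ℤ) - (N:ℤ)) * (d:ℤ)))

noncomputable def gbase (N k d : ℕ) (z : ℕ → ℂ) (w : ℂ) : ℂ :=
  (k:ℂ) * Qk k (z 1) w * (∏ l ∈ Icc 2 d, ek k (z (l-1)) (z l)) *
    (∏ l ∈ Icc 1 d, (z l) ^ (-(N:ℤ))) *
    (∏ l ∈ Icc 1 (d-1),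
      ((k:ℂ) * z l * (2*z l - (Function.update z 0 w) (l-1) - z (l+1)))⁻¹) *
    (z d) ^ (-(1 + ((k:ℤ) - (N:ℤ)) * (d:ℤ)))

noncomputable def gmid (N k d i : ℕ) (z : ℕ → ℂ) (w : ℂ) : ℂ :=
  CF N k i * ((i:ℂ)/((i:ℂ)+1)) * w ^ (i*(k-N)) * Qk k (z (i+1)) w *
    (∏ l ∈ Icc (i+2) d, ek k (z (l-1)) (z l)) *
    (∏ l ∈ Icc (i+1) d, (z l) ^ (-(N:ℤ))) *
    (∏ l ∈ Icc (i+1) (d-1),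
      ((k:ℂ) * z l * (2*z l - (Function.update z i w) (l-1) - z (l+1)))⁻¹) *
    (z d) ^ (-(1 + ((k:ℤ) - (N:ℤ)) * (d:ℤ)))

lemma Qk_zero (k : ℕ) (a : ℂ) : Qk k a 0 = (Nat.factorial k : ℂ) * a ^ k := by
  rw [Qk]
  have h : (∏ j ∈ range k, (((k:ℂ) - ((j:ℂ)+1)) * 0 + ((j:ℂ)+1) * a))
      = ∏ j ∈ range k, (((j:ℂ)+1) * a) := Finset.prod_congr rfl (fun j _ => by ring)
  rw [h, Finset.prod_mul_distrib, Finset.prod_const, Finset.card_range,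
    ← Finset.prod_range_add_one_eq_factorial, Nat.cast_prod]
  push_cast; ring

lemma CF_one (N k : ℕ) : CF N k 1 = (k:ℂ) * (Nat.factorial k : ℂ) := by
  simp [CF]

lemma pole_factor {i : ℕ} (hi : 1 ≤ i) (w c : ℂ) :
    ((((i:ℂ)+1)/(i:ℂ)) * w - c)⁻¹ =
      ((i:ℂ)/((i:ℂ)+1)) * (w - (i:ℂ)/((i:ℂ)+1) * c)⁻¹ := by
  have hi0 : (i:ℂ) ≠ 0 := Nat.cast_ne_zero.2 (by omega)
  have hi1 : ((i:ℂ)+1) ≠ 0 := by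
    have : ((i+1 : ℕ) : ℂ) ≠ 0 := Nat.cast_ne_zero.2 (by omega)
    push_cast at this; exact this
  rw [show (((i:ℂ)+1)/(i:ℂ)) * w - c = (((i:ℂ)+1)/(i:ℂ)) * (w - (i:ℂ)/((i:ℂ)+1) * c) by
    field_simp, mul_inv, inv_div]

lemma Qk_at {k i : ℕ} (hi : 1 ≤ i) (c : ℂ) :
    Qk k c ((i:ℂ)/((i:ℂ)+1) * c) =
      (∏ j ∈ range k, ((k*i+j+1 : ℕ) : ℂ)) * (((i:ℂ)+1)⁻¹)^k * c ^ k := by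
  have hi0 : (i:ℂ) ≠ 0 := Nat.cast_ne_zero.2 (by omega)
  have hi1 : ((i:ℂ)+1) ≠ 0 := by
    have : ((i+1 : ℕ) : ℂ) ≠ 0 := Nat.cast_ne_zero.2 (by omega)
    push_cast at this; exact this
  rw [Qk]
  have h : (∏ j ∈ range k, (((k:ℂ) - ((j:ℂ)+1)) * ((i:ℂ)/((i:ℂ)+1) * c) + ((j:ℂ)+1) * c))
      = ∏ j ∈ range k, (((k*i+j+1 : ℕ) : ℂ) * ((i:ℂ)+1)⁻¹ * c) :=
    Finset.prod_congr rfl (fun j _ => by push_cast; field_simp; ring)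
  rw [h, Finset.prod_mul_distrib, Finset.prod_mul_distrib, Finset.prod_const, Finset.prod_const,
    Finset.card_range]

lemma base_pow {N : ℕ} (hN : 2 ≤ N) {w : ℂ} (hw : w ≠ 0) :
    w ^ (-(N:ℤ)) * w ^ ((N:ℤ)-2) * w = w⁻¹ := by
  rw [← zpow_add₀ hw, show (-(N:ℤ)) + ((N:ℤ)-2) = -2 by ring, show (-2:ℤ) = -(2:ℕ) by norm_num,
    zpow_neg, zpow_natCast]
  field_simp [hw]

lemma mid_pow {N k : ℕ} (i : ℕ) (hNk : N ≤ k) {z : ℂ} (hz : z ≠ 0) :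
    z ^ (i*(k-N)) * z ^ k * z ^ (-(N:ℤ)) = z ^ ((i+1)*(k-N)) := by
  obtain ⟨m, rfl⟩ : ∃ m, k = N + m := ⟨k - N, (Nat.add_sub_cancel' hNk).symm⟩
  have hs : N + m - N = m := by omega
  rw [hs, zpow_neg, zpow_natCast, ← pow_add]
  rw [eq_comm, eq_mul_inv_iff_mul_eq₀ (pow_ne_zero _ hz), ← pow_add]
  congr 1
  ring

lemma last_pow {N k d : ℕ} (hNk : N ≤ k) (hd : 1 ≤ d) {z : ℂ} (hz : z ≠ 0) :
    z ^ ((d-1)*(k-N)) * z ^ k * z ^ (-(N:ℤ)) * z ^ (-(1 + ((k:ℤ)-(N:ℤ))*(d:ℤ))) = z⁻¹ := by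
  obtain ⟨m, rfl⟩ : ∃ m, k = N + m := ⟨k - N, (Nat.add_sub_cancel' hNk).symm⟩
  have hs : N + m - N = m := by omega
  rw [hs, ← zpow_natCast z ((d-1)*m), ← zpow_natCast z (N+m), ← zpow_add₀ hz, ← zpow_add₀ hz,
    ← zpow_add₀ hz, show (((d-1)*m : ℕ) : ℤ) + ((N+m : ℕ) : ℤ) + (-(N:ℤ)) +
      (-(1 + (((N+m : ℕ) :ℤ) - (N:ℤ))*(d:ℤ))) = -1 by push_cast [Nat.cast_sub hd]; ring,
    zpow_neg_one]

lemma denom_ne {a b c : ℂ} (h : ‖b‖ + ‖c‖ < 2 * ‖a‖) :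
    2*a - b - c ≠ 0 := by
  intro h0
  have hbc : 2*a = b + c := by linear_combination h0
  have h1 : ‖(2*a)‖ ≤ ‖b‖ + ‖c‖ := by
    rw [hbc]; exact norm_add_le b c
  have h2 : ‖(2*a)‖ = 2 * ‖a‖ := by
    rw [norm_mul]; norm_num
  linarith

lemma diff_Qk (k : ℕ) (a : ℂ) : Differentiable ℂ (fun w => Qk k a w) := by
  unfold Qk
  apply Differentiable.fun_finsetProd
  intro j _
  fun_prop

lemma diffOn_invprod (k i dm : ℕ) (z : ℕ → ℂ) (s : Set ℂ)
    (h : ∀ l ∈ Icc (i+1) dm, ∀ w ∈ s,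
      ((k:ℂ) * z l * (2*z l - (Function.update z i w) (l-1) - z (l+1))) ≠ 0) :
    DifferentiableOn ℂ
      (fun w => ∏ l ∈ Icc (i+1) dm,
        ((k:ℂ) * z l * (2*z l - (Function.update z i w) (l-1) - z (l+1)))⁻¹) s := by
  apply DifferentiableOn.fun_finsetProd
  intro l hl
  refine DifferentiableOn.inv ?_ (fun w hw => h l hl w hw)
  rcases eq_or_ne (l-1) i with h' | h'
  · have : ∀ w : ℂ, Function.update z i w (l-1) = w := fun w => by rw [h']; exact Function.update_self i w z
    simp only [this]
    fun_prop
  · simp only [Function.update_of_ne h']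
    fun_prop

lemma diffOn_gbase (N k d : ℕ) (z : ℕ → ℂ) (s : Set ℂ)
    (h : ∀ l ∈ Icc 1 (d-1), ∀ w ∈ s,
      ((k:ℂ) * z l * (2*z l - (Function.update z 0 w) (l-1) - z (l+1))) ≠ 0) :
    DifferentiableOn ℂ (gbase N k d z) s := by
  unfold gbase
  exact (((((differentiableOn_const _).mul (diff_Qk k (z 1)).differentiableOn).mul
    (differentiableOn_const _)).mul (differentiableOn_const _)).mul
    (diffOn_invprod k 0 (d-1) z s h)).mul (differentiableOn_const _)

lemma diffOn_gmid (N k d i : ℕ) (z : ℕ → ℂ) (s : Set ℂ)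
    (h : ∀ l ∈ Icc (i+1) (d-1), ∀ w ∈ s,
      ((k:ℂ) * z l * (2*z l - (Function.update z i w) (l-1) - z (l+1))) ≠ 0) :
    DifferentiableOn ℂ (gmid N k d i z) s := by
  unfold gmid
  exact ((((((differentiableOn_const _).mul (differentiableOn_id.pow _)).mul
    (diff_Qk k (z (i+1))).differentiableOn).mul (differentiableOn_const _)).mul
    (differentiableOn_const _)).mul
    (diffOn_invprod k i (d-1) z s h)).mul (differentiableOn_const _)

lemma iterOp_succ (r : ℕ → ℝ) (n : ℕ) (F : (ℕ → ℂ) → ℂ) (z : ℕ → ℂ) :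
    iterOp r (n+1) F z = (2 * (Real.pi : ℂ) * Complex.I)⁻¹ *
      ∮ w in C((0 : ℂ), r n), iterOp r n F (Function.update z n w) := rfl

lemma iterOp_one (r : ℕ → ℝ) (F : (ℕ → ℂ) → ℂ) (z : ℕ → ℂ) :
    iterOp r 1 F z = (2 * (Real.pi : ℂ) * Complex.I)⁻¹ *
      ∮ w in C((0 : ℂ), r 0), F (Function.update z 0 w) := rfl

lemma stage_one (N k d : ℕ) (hN : 2 ≤ N) (hNk : N ≤ k) (hd : 1 ≤ d) (r : ℕ → ℝ)
    (hrpos : ∀ i, i ≤ d → 0 < r i)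
    (hrconc : ∀ i, 1 ≤ i → i + 1 ≤ d → r (i - 1) + r (i + 1) < 2 * r i)
    (z : ℕ → ℂ) (hz : ∀ l, 1 ≤ l → l ≤ d → ‖(z l)‖ = r l) :
    iterOp r 1 (integrandCY N k d) z =
      if 1 < d then midA N k d 1 z else CF N k d * (z d)⁻¹ := by
  have hk2 : 2 ≤ k := le_trans hN hNk
  have hkC : (k:ℂ) ≠ 0 := Nat.cast_ne_zero.2 (by omega)
  have hr0 : 0 < r 0 := hrpos 0 (by omega)
  have hzl : ∀ l, 1 ≤ l → l ≤ d → z l ≠ 0 := by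
    intro l h1 h2 h0
    have := hz l h1 h2
    rw [h0] at this; simp only [norm_zero] at this
    linarith [hrpos l h2]
  have hden : ∀ l ∈ Icc 1 (d-1), ∀ w ∈ Metric.closedBall (0:ℂ) (r 0),
      ((k:ℂ) * z l * (2*z l - (Function.update z 0 w) (l-1) - z (l+1))) ≠ 0 := by
    intro l hl w hw
    simp only [Finset.mem_Icc] at hl
    have hld : l + 1 ≤ d := by omega
    have h2 : ‖(Function.update z 0 w (l-1))‖ ≤ r (l-1) := by
      rcases eq_or_ne (l-1) 0 with h' | h'
      · rw [h', Function.update_self]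
        simpa [Complex.dist_eq] using hw
      · rw [Function.update_of_ne h']
        exact le_of_eq (hz (l-1) (by omega) (by omega))
    refine mul_ne_zero (mul_ne_zero hkC (hzl l (by omega) (by omega))) (denom_ne ?_)
    have hc := hrconc l (by omega) hld
    have h3 := hz (l+1) (by omega) hld
    have h4 := hz l (by omega) (by omega)
    rw [h3, h4]
    linarith
  rw [iterOp_one]
  rw [cauchy_step (p := 0) hr0 (by simpa using hr0) (diffOn_gbase N k d z _ hden) ?hf]
  case hf =>
    intro w hw
    have hw' : ‖w‖ = r 0 := by simpa [Complex.dist_eq] using hw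
    have hw0 : w ≠ 0 := by
      intro h; rw [h] at hw'; simp only [norm_zero] at hw'; linarith
    unfold integrandCY gbase
    rw [prodIcc_head hd (fun l => ek k (Function.update z 0 w (l-1)) (Function.update z 0 w l))]
    rw [Nat.range_eq_Icc_zero_sub_one (d+1) (by omega)]
    simp only [Nat.add_sub_cancel]
    rw [prodIcc_head (Nat.zero_le d) (fun l => (Function.update z 0 w l) ^ (-(N:ℤ)))]
    simp only [show (1:ℕ)-1 = 0 from rfl, show (0:ℕ)+1 = 1 from rfl, Function.update_self]
    rw [Function.update_of_ne (show (1:ℕ) ≠ 0 by omega),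
      Function.update_of_ne (show d ≠ 0 by omega)]
    have e1 : (∏ l ∈ Icc 1 d, (Function.update z 0 w l) ^ (-(N:ℤ)))
        = ∏ l ∈ Icc 1 d, (z l) ^ (-(N:ℤ)) :=
      Finset.prod_congr rfl (fun l hl => by
        simp only [Finset.mem_Icc] at hl
        rw [Function.update_of_ne (by omega)])
    have e2 : (∏ l ∈ Icc 2 d, ek k (Function.update z 0 w (l-1)) (Function.update z 0 w l))
        = ∏ l ∈ Icc 2 d, ek k (z (l-1)) (z l) :=
      Finset.prod_congr rfl (fun l hl => by
        simp only [Finset.mem_Icc] at hl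
        rw [Function.update_of_ne (by omega), Function.update_of_ne (by omega)])
    have e3 : (∏ l ∈ Icc 1 (d-1), ((k:ℂ) * Function.update z 0 w l *
          (2 * Function.update z 0 w l - Function.update z 0 w (l-1)
            - Function.update z 0 w (l+1)))⁻¹)
        = ∏ l ∈ Icc 1 (d-1), ((k:ℂ) * z l *
            (2 * z l - Function.update z 0 w (l-1) - z (l+1)))⁻¹ :=
      Finset.prod_congr rfl (fun l hl => by
        simp only [Finset.mem_Icc] at hl
        rw [Function.update_of_ne (show l ≠ 0 by omega),
          Function.update_of_ne (show l+1 ≠ 0 by omega)])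
    rw [e1, e2, e3, ek_eq_Qk k w (z 1), sub_zero, ← base_pow hN hw0]
    ring
  rcases Nat.lt_or_ge 1 d with hd2 | hd1
  · rw [if_pos hd2]
    unfold gbase midA
    rw [Qk_zero]
    rw [prodIcc_head (show 1 ≤ d-1 by omega)
      (fun l => ((k:ℂ) * z l * (2*z l - Function.update z 0 (0:ℂ) (l-1) - z (l+1)))⁻¹)]
    simp only [show (1:ℕ)-1 = 0 from rfl, Function.update_self]
    have e3 : (∏ l ∈ Icc 2 (d-1), ((k:ℂ) * z l *
          (2 * z l - Function.update z 0 (0:ℂ) (l-1) - z (l+1)))⁻¹)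
        = ∏ l ∈ Icc 2 (d-1), ((k:ℂ) * z l * (2 * z l - z (l-1) - z (l+1)))⁻¹ :=
      Finset.prod_congr rfl (fun l hl => by
        simp only [Finset.mem_Icc] at hl
        rw [Function.update_of_ne (show l-1 ≠ 0 by omega)])
    rw [e3, prodIcc_head (show 1 ≤ d by omega) (fun l => (z l) ^ (-(N:ℤ))), CF_one,
      ← mid_pow 0 hNk (hzl 1 (by omega) (by omega)), mul_inv ((k:ℂ) * z 1), sub_zero,
      Nat.cast_one, show ((1:ℂ)+1)/1 = 2 by norm_num, Nat.zero_mul, pow_zero]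
    ring
  · have hd1' : d = 1 := by omega
    subst hd1'
    rw [if_neg (by omega)]
    unfold gbase
    rw [Qk_zero, CF_one, show Icc 2 1 = (∅ : Finset ℕ) from Finset.Icc_eq_empty (by omega),
      show (1:ℕ)-1 = 0 from rfl, show Icc 1 0 = (∅ : Finset ℕ) from Finset.Icc_eq_empty (by omega),
      Finset.prod_empty, Finset.prod_empty, Finset.Icc_self, Finset.prod_singleton,
      ← last_pow (N := N) (k := k) (d := 1) hNk le_rfl (hzl 1 le_rfl le_rfl),
      show (1-1)*(k-N) = 0 by norm_num, pow_zero]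
    ring

lemma stage_succ (N k d i : ℕ) (hN : 2 ≤ N) (hNk : N ≤ k) (hi : 1 ≤ i) (hid : i + 1 ≤ d)
    (r : ℕ → ℝ) (hrpos : ∀ j, j ≤ d → 0 < r j)
    (hrconc : ∀ j, 1 ≤ j → j + 1 ≤ d → r (j - 1) + r (j + 1) < 2 * r j)
    (z : ℕ → ℂ) (hz : ∀ l, i+1 ≤ l → l ≤ d → ‖(z l)‖ = r l)
    (IH : ∀ y : ℕ → ℂ, (∀ l, i ≤ l → l ≤ d → ‖(y l)‖ = r l) →
      iterOp r i (integrandCY N k d) y = midA N k d i y) :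
    iterOp r (i+1) (integrandCY N k d) z =
      if i+1 < d then midA N k d (i+1) z else CF N k d * (z d)⁻¹ := by
  have hk2 : 2 ≤ k := le_trans hN hNk
  have hkC : (k:ℂ) ≠ 0 := Nat.cast_ne_zero.2 (by omega)
  have hri : 0 < r i := hrpos i (by omega)
  have hzl : ∀ l, i+1 ≤ l → l ≤ d → z l ≠ 0 := by
    intro l h1 h2 h0
    have := hz l h1 h2
    rw [h0] at this; simp only [norm_zero] at this
    linarith [hrpos l h2]
  have hiC : (i:ℂ) ≠ 0 := Nat.cast_ne_zero.2 (by omega)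
  have hi1C : ((i:ℂ)+1) ≠ 0 := by
    have : ((i+1 : ℕ) : ℂ) ≠ 0 := Nat.cast_ne_zero.2 (by omega)
    push_cast at this; exact this
  have habsq : ‖((i:ℂ)/((i:ℂ)+1))‖ = (i:ℝ)/((i:ℝ)+1) := by
    rw [norm_div, Complex.norm_natCast, show ((i:ℂ)+1) = ((i+1:ℕ):ℂ) by push_cast; ring,
      Complex.norm_natCast]
    push_cast; ring
  have hp : ‖((i:ℂ)/((i:ℂ)+1) * z (i+1))‖ < r i := by
    rw [norm_mul, habsq, hz (i+1) le_rfl hid]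
    have hlt := radius_lt hrpos hrconc i hi hid
    rw [div_mul_eq_mul_div, div_lt_iff₀ (by positivity)]
    linarith
  have hden : ∀ l ∈ Icc (i+1) (d-1), ∀ w ∈ Metric.closedBall (0:ℂ) (r i),
      ((k:ℂ) * z l * (2*z l - (Function.update z i w) (l-1) - z (l+1))) ≠ 0 := by
    intro l hl w hw
    simp only [Finset.mem_Icc] at hl
    have hld : l + 1 ≤ d := by omega
    have h2 : ‖(Function.update z i w (l-1))‖ ≤ r (l-1) := by
      rcases eq_or_ne (l-1) i with h' | h'
      · rw [h', Function.update_self]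
        simpa [Complex.dist_eq] using hw
      · rw [Function.update_of_ne h']
        exact le_of_eq (hz (l-1) (by omega) (by omega))
    refine mul_ne_zero (mul_ne_zero hkC (hzl l (by omega) (by omega))) (denom_ne ?_)
    have hc := hrconc l (by omega) hld
    have h3 := hz (l+1) (by omega) hld
    have h4 := hz l (by omega) (by omega)
    rw [h3, h4]
    linarith
  rw [iterOp_succ]
  rw [cauchy_step (p := (i:ℂ)/((i:ℂ)+1) * z (i+1)) hri hp
    (diffOn_gmid N k d i z _ hden) ?hf]
  case hf =>
    intro w hw
    have hw' : ‖w‖ = r i := by simpa [Complex.dist_eq] using hw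
    have hw0 : w ≠ 0 := by
      intro h; rw [h] at hw'; simp only [norm_zero] at hw'; linarith
    rw [IH (Function.update z i w) (by
      intro l h1 h2
      rcases eq_or_ne l i with h' | h'
      · rw [h', Function.update_self]; rw [← h']; exact h' ▸ hw'
      · rw [Function.update_of_ne h']; exact hz l (by omega) h2)]
    unfold midA gmid
    rw [prodIcc_head (show i+1 ≤ d by omega)
      (fun l => ek k (Function.update z i w (l-1)) (Function.update z i w l)),
      show i+1-1 = i by omega, Function.update_self i w z,
      Function.update_of_ne (show i+1 ≠ i by omega),
      Function.update_of_ne (show d ≠ i by omega)]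
    have e1 : (∏ l ∈ Icc (i+1) d, (Function.update z i w l) ^ (-(N:ℤ)))
        = ∏ l ∈ Icc (i+1) d, (z l) ^ (-(N:ℤ)) :=
      Finset.prod_congr rfl (fun l hl => by
        simp only [Finset.mem_Icc] at hl
        rw [Function.update_of_ne (by omega)])
    have e2 : (∏ l ∈ Icc (i+2) d, ek k (Function.update z i w (l-1))
          (Function.update z i w l))
        = ∏ l ∈ Icc (i+2) d, ek k (z (l-1)) (z l) :=
      Finset.prod_congr rfl (fun l hl => by
        simp only [Finset.mem_Icc] at hl
        rw [Function.update_of_ne (show l-1 ≠ i by omega),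
          Function.update_of_ne (show l ≠ i by omega)])
    have e3 : (∏ l ∈ Icc (i+1) (d-1), ((k:ℂ) * Function.update z i w l *
          (2 * Function.update z i w l - Function.update z i w (l-1)
            - Function.update z i w (l+1)))⁻¹)
        = ∏ l ∈ Icc (i+1) (d-1), ((k:ℂ) * z l *
            (2 * z l - Function.update z i w (l-1) - z (l+1)))⁻¹ :=
      Finset.prod_congr rfl (fun l hl => by
        simp only [Finset.mem_Icc] at hl
        rw [Function.update_of_ne (show l ≠ i by omega),
          Function.update_of_ne (show l+1 ≠ i by omega)])
    rw [show i+1+1 = i+2 by omega] at e2 ⊢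
    rw [e1, e2, e3, ek_eq_Qk k w (z (i+1)), pole_factor hi w (z (i+1))]
    have hwp : w - (i:ℂ)/((i:ℂ)+1) * z (i+1) ≠ 0 := by
      intro h0
      have hww : w = (i:ℂ)/((i:ℂ)+1) * z (i+1) := by linear_combination h0
      rw [hww] at hw'
      linarith [hp, le_of_eq hw'.symm]
    generalize hu : (w - (i:ℂ)/((i:ℂ)+1) * z (i+1))⁻¹ = u
    generalize hQ : Qk k (z (i+1)) w = Q
    generalize hE : (∏ l ∈ Icc (i+2) d, ek k (z (l-1)) (z l)) = E
    generalize hZ : (∏ l ∈ Icc (i+1) d, (z l) ^ (-(N:ℤ))) = Z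
    generalize hV : (∏ l ∈ Icc (i+1) (d-1),
      ((k:ℂ) * z l * (2 * z l - Function.update z i w (l-1) - z (l+1)))⁻¹) = V
    generalize hD : z d ^ (-(1 + ((k:ℤ) - (N:ℤ)) * (d:ℤ))) = D
    generalize hW : w ^ (i*(k-N)) = W
    generalize hc : (i:ℂ)/((i:ℂ)+1) = c
    generalize hA : CF N k i = A
    field_simp
  rcases Nat.lt_or_ge (i+1) d with hd2 | hd1
  · rw [if_pos hd2]
    unfold gmid midA
    rw [prodIcc_head (show i+1 ≤ d-1 by omega)
      (fun l => ((k:ℂ) * z l * (2*z l -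
        Function.update z i ((i:ℂ)/((i:ℂ)+1) * z (i+1)) (l-1) - z (l+1)))⁻¹),
      show i+1-1 = i by omega, Function.update_self i ((i:ℂ)/((i:ℂ)+1) * z (i+1)) z]
    have e3 : (∏ l ∈ Icc (i+2) (d-1), ((k:ℂ) * z l * (2 * z l -
          Function.update z i ((i:ℂ)/((i:ℂ)+1) * z (i+1)) (l-1) - z (l+1)))⁻¹)
        = ∏ l ∈ Icc (i+2) (d-1), ((k:ℂ) * z l * (2 * z l - z (l-1) - z (l+1)))⁻¹ :=
      Finset.prod_congr rfl (fun l hl => by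
        simp only [Finset.mem_Icc] at hl
        rw [Function.update_of_ne (show l-1 ≠ i by omega)])
    rw [show i+1+1 = i+2 by omega, e3,
      prodIcc_head (show i+1 ≤ d by omega) (fun l => (z l) ^ (-(N:ℤ))),
      show i+1+1 = i+2 by omega,
      Qk_at hi (z (i+1)), mul_pow, CF_rec N k i hNk (by omega) hi,
      ← mid_pow i hNk (hzl (i+1) le_rfl (by omega)),
      show 2*z (i+1) - (i:ℂ)/((i:ℂ)+1)*z (i+1) - z (i+1+1)
          = ((((i+1:ℕ):ℂ))+1)/((i+1:ℕ):ℂ) * z (i+1) - z (i+1+1) by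
        push_cast; field_simp; ring,
      mul_inv ((k:ℂ) * z (i+1))]
    ring
  · have hd1' : d = i+1 := by omega
    subst hd1'
    rw [if_neg (by omega)]
    unfold gmid
    rw [show Icc (i+2) (i+1) = (∅ : Finset ℕ) from Finset.Icc_eq_empty (by omega),
      show (i+1)-1 = i by omega,
      show Icc (i+1) i = (∅ : Finset ℕ) from Finset.Icc_eq_empty (by omega),
      Finset.prod_empty, Finset.prod_empty, Finset.Icc_self, Finset.prod_singleton,
      Qk_at hi (z (i+1)), mul_pow, CF_rec N k i hNk (by omega) hi,
      ← last_pow (N:=N) (k:=k) (d:=i+1) hNk (by omega) (hzl (i+1) le_rfl le_rfl),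
      show (i+1)-1 = i by omega]
    ring

lemma stage (N k d : ℕ) (hN : 2 ≤ N) (hNk : N ≤ k) (hd : 1 ≤ d) (r : ℕ → ℝ)
    (hrpos : ∀ i, i ≤ d → 0 < r i)
    (hrconc : ∀ i, 1 ≤ i → i + 1 ≤ d → r (i - 1) + r (i + 1) < 2 * r i) :
    ∀ i, 1 ≤ i → i ≤ d → ∀ z : ℕ → ℂ,
      (∀ l, i ≤ l → l ≤ d → ‖(z l)‖ = r l) →
      iterOp r i (integrandCY N k d) z =
        if i < d then midA N k d i z else CF N k d * (z d)⁻¹ := by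
  intro i hi
  induction i, hi using Nat.le_induction with
  | base =>
    intro _ z hz
    exact stage_one N k d hN hNk hd r hrpos hrconc z hz
  | succ n hn IH =>
    intro hid z hz
    refine stage_succ N k d n hN hNk hn hid r hrpos hrconc z hz ?_
    intro y hy
    have h := IH (by omega) y hy
    rwa [if_pos (by omega)] at h

/-- For `2 ≤ N ≤ k` and `d ≥ 1`:
`(1/k)·d^{1+(k-N)d}·w(O_{h^{N-2}} O_{h^{-1-(k-N)d}})_{0,2} = (kd)!/(d!)^N`. -/
theorem stmt12 (N k d : ℕ) (hN : 2 ≤ N) (hNk : N ≤ k) (hd : 1 ≤ d)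
    (r : ℕ → ℝ) (hrpos : ∀ i, i ≤ d → 0 < r i)
    (hrconc : ∀ i, 1 ≤ i → i + 1 ≤ d → r (i - 1) + r (i + 1) < 2 * r i) :
    (1 / (k : ℂ)) * (d : ℂ) ^ (1 + (k - N) * d) * wCY N k d r =
      (Nat.factorial (k * d) : ℂ) / (Nat.factorial d : ℂ) ^ N := by
  have hk2 : 2 ≤ k := le_trans hN hNk
  have hkC : (k:ℂ) ≠ 0 := Nat.cast_ne_zero.2 (by omega)
  have hdC : (d:ℂ) ≠ 0 := Nat.cast_ne_zero.2 (by omega)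
  have hrd : 0 < r d := hrpos d le_rfl
  have hW : wCY N k d r = CF N k d := by
    rw [wCY, iterOp_succ]
    rw [cauchy_step (p := 0) hrd (by simpa using hrd)
      (differentiableOn_const (CF N k d)) ?hf]
    case hf =>
      intro w hw
      have hw' : ‖w‖ = r d := by simpa [Complex.dist_eq] using hw
      have h := stage N k d hN hNk hd r hrpos hrconc d hd le_rfl
        (Function.update (fun _ => (0:ℂ)) d w) (by
          intro l h1 h2
          rw [show l = d by omega, Function.update_self]
          exact hw')
      rw [h, if_neg (by omega), Function.update_self, sub_zero]
      ring
  rw [hW, CF, show 1 + (k-N)*d = d*(k-N)+1 by ring]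
  have hfd : ((Nat.factorial d : ℕ) : ℂ) ≠ 0 := Nat.cast_ne_zero.2 (Nat.factorial_ne_zero d)
  field_simp
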